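/- arXiv:1307.1652 — 4 statements merged into one kernel-verified Lean document; each statement's English description precedes it below -/
import Mathlib

section
/- Let R be a commutative ring with identity and let P be a finite subset of R. Let P_0, P_1, ..., P_r be subsets of P such that (i) the union of P_0, ..., P_r is P; (ii) P_0 has exactly one element; (iii) whenever p and p' are distinct elements of P_i (for 0 < i ≤ r), there exists an index i' with 0 ≤ i' < i and an element of P_{i'} that divides the product p·p'. For each i set q_i = Σ_{p ∈ P_i} p^{e(p)}, where the e(p) ≥ 1 are arbitrary positive integers. Then the radical of the ideal of R generated by P equals the radical of the ideal generated by q_0, q_1, ..., q_r. -/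
/-!
Both radicals are intersections of prime ideals, and each `qᵢ` lies in `(P)`, so it suffices
to show that a prime `𝔭` containing every `qᵢ` contains every `Pᵢ`. This goes by induction on
`i`: if `p ∈ Pᵢ` were not in `𝔭`, then for each other `p' ∈ Pᵢ` the product `p * p'` is a
multiple of an element of an earlier `P_{i'}`, hence in `𝔭`, so `p' ∈ 𝔭`; subtracting these
terms from `qᵢ ∈ 𝔭` leaves `p ^ e(p) ∈ 𝔭`, a contradiction.
-/

namespace Ideal.IsPrime

variable {R : Type*} [CommRing R] {𝔭 : Ideal R}

theorem mem_of_sum_pow_mem (h𝔭 : 𝔭.IsPrime) {s : Finset R} {e : R → ℕ} {p : R} (hp : p ∈ s)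
    (he : ∀ x ∈ s, x ≠ p → e x ≠ 0) (hsum : ∑ x ∈ s, x ^ e x ∈ 𝔭)
    (hmul : ∀ x ∈ s, x ≠ p → p * x ∈ 𝔭) : p ∈ 𝔭 := by
  classical
  by_contra hp𝔭
  have hrest : ∑ x ∈ s.erase p, x ^ e x ∈ 𝔭 := by
    refine Ideal.sum_mem _ fun x hx => ?_
    obtain ⟨hxp, hxs⟩ := Finset.mem_erase.mp hx
    have hx𝔭 : x ∈ 𝔭 := (h𝔭.mem_or_mem (hmul x hxs hxp)).resolve_left hp𝔭
    exact Ideal.pow_mem_of_mem _ hx𝔭 _ (Nat.pos_of_ne_zero (he x hxs hxp))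
  rw [← Finset.add_sum_erase _ _ hp] at hsum
  exact hp𝔭 (h𝔭.mem_of_pow_mem _ ((Ideal.add_mem_iff_left _ hrest).mp hsum))

theorem subset_of_sum_pow_mem {ι : Type*} [Preorder ι] [WellFoundedLT ι] (h𝔭 : 𝔭.IsPrime)
    (S : ι → Finset R) (e : R → ℕ) (he : ∀ i, ∀ x ∈ S i, e x ≠ 0)
    (hsum : ∀ i, ∑ x ∈ S i, x ^ e x ∈ 𝔭)
    (hdiv : ∀ i, ∀ x ∈ S i, ∀ y ∈ S i, x ≠ y → ∃ j < i, ∃ a ∈ S j, a ∣ x * y) (i : ι) :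
    (S i : Set R) ⊆ 𝔭 := by
  induction i using WellFoundedLT.induction with
  | _ i ih =>
    intro p hp
    refine h𝔭.mem_of_sum_pow_mem hp (fun x hx _ => he i x hx) (hsum i) fun x hx hxp => ?_
    obtain ⟨j, hji, a, ha, hdvd⟩ := hdiv i p hp x hx hxp.symm
    exact Ideal.mem_of_dvd _ hdvd (ih j hji ha)

end Ideal.IsPrime

/-- **Schmitt–Vogel lemma.**  Let `R` be a commutative ring with identity and `P` a finite
subset of `R`.  Let `P₀, …, P_r` be subsets of `P` such that (i) their union is `P`,
(ii) `P₀` has exactly one element, and (iii) whenever `p ≠ p'` are elements of `Pᵢ`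
(`0 < i ≤ r`), there is an `i' < i` and an element of `P_{i'}` dividing `p * p'`.
Set `qᵢ = ∑_{p ∈ Pᵢ} p ^ e p` with arbitrary exponents `e p ≥ 1`.  Then the radical of the
ideal generated by `P` equals the radical of the ideal generated by `q₀, …, q_r`. -/
theorem schmitt_vogel {R : Type*} [CommRing R] (P : Finset R) (r : ℕ)
    (Psub : Fin (r + 1) → Finset R)
    (hsub : ∀ i, Psub i ⊆ P)
    (hunion : (⋃ i, (Psub i : Set R)) = (P : Set R))
    (hcard : (Psub 0).card = 1)
    (hdiv : ∀ i : Fin (r + 1), 0 < i → ∀ p ∈ Psub i, ∀ p' ∈ Psub i, p ≠ p' →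
      ∃ i' : Fin (r + 1), i' < i ∧ ∃ a ∈ Psub i', a ∣ p * p')
    (e : R → ℕ) (he : ∀ p ∈ P, 1 ≤ e p)
    (q : Fin (r + 1) → R) (hq : ∀ i, q i = ∑ p ∈ Psub i, p ^ e p) :
    (Ideal.span (P : Set R)).radical = (Ideal.span (Set.range q)).radical := by
  have hdiv_all : ∀ i, ∀ p ∈ Psub i, ∀ p' ∈ Psub i, p ≠ p' →
      ∃ i' < i, ∃ a ∈ Psub i', a ∣ p * p' := by
    intro i p hp p' hp' hne
    rcases eq_or_ne i 0 with rfl | hi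
    · exact absurd (Finset.card_le_one.mp hcard.le p hp p' hp') hne
    · exact hdiv i ((Fin.pos_iff_ne_zero' i).mpr hi) p hp p' hp' hne
  refine le_antisymm ?_ (Ideal.radical_mono ?_)
  · rw [Ideal.radical_le_radical_iff, Ideal.span_le]
    intro p hp
    obtain ⟨i, hpi⟩ := Set.mem_iUnion.mp (hunion ▸ hp)
    rw [SetLike.mem_coe, Ideal.radical_eq_sInf, Submodule.mem_sInf]
    rintro 𝔭 ⟨hq𝔭, h𝔭⟩
    refine h𝔭.subset_of_sum_pow_mem Psub e (fun i x hx => ?_) (fun i => ?_) hdiv_all i hpi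
    · exact Nat.one_le_iff_ne_zero.mp (he x (hsub i hx))
    · exact hq i ▸ hq𝔭 (Ideal.subset_span ⟨i, rfl⟩)
  · rw [Ideal.span_le, Set.range_subset_iff]
    intro i
    rw [hq i]
    exact Ideal.sum_mem _ fun p hp =>
      Ideal.pow_mem_of_mem _ (Ideal.subset_span (hsub i hp)) _ (he p (hsub i hp))
end

section
/- Let n ≥ 6 and let S_n be the n-sunlet graph, with edge ideal I(S_n) in R = K[x_1,...,x_n,y_1,...,y_n] over a field K. Define the polynomials q_0 = x_1 x_2; q_1 = x_1 x_n + x_2 x_3; q_i = x_i y_i + x_{i+1} x_{i+2} for i = 2,...,n−4; q_{n−3} = x_1 y_1 + x_{n−1} x_n; q_{n−2} = x_{n−3} y_{n−3} + x_{n−2} x_{n−1} + x_{n−2} y_{n−2} x_n y_n; and q_{n−1} = x_{n−2} y_{n−2} + x_{n−1} y_{n−1} + x_n y_n. Then I(S_n) equals the radical of the ideal (q_0, q_1, ..., q_{n−1}). -/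
/-!
If `a + b` and `a * b` lie in a radical ideal, so do `a` and `b`, because `a ^ 2 = a (a + b) - a b`;
likewise for three summands with pairwise products in the ideal. Starting from `x₁x₂ = q₀`, each
`q_i` is such a sum whose cross products are multiples of edges already obtained, so walking along
`q₁, q₂, …, q_{n-1}` puts every edge of the sunlet into `√(q₀, …, q_{n-1})`. Conversely every `q_i`
lies in `I(S_n)`, and `I(S_n)` is radical since it is generated by squarefree monomials.
-/

open MvPolynomial
open Fin.NatCast

namespace MvPolynomial

section

variable {σ R : Type*} [CommSemiring R]

theorem aeval_indicator_X_monomial_of_subset {t : Set σ} {e : σ →₀ ℕ} (h : ↑e.support ⊆ t)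
    (c : R) : aeval (t.indicator X) (monomial e c) = monomial e c := by
  rw [aeval_monomial, algebraMap_eq, monomial_eq]
  congr 1
  refine Finsupp.prod_congr fun i hi => ?_
  rw [Set.indicator_of_mem (h hi)]

theorem aeval_indicator_X_monomial_of_not_subset {t : Set σ} {e : σ →₀ ℕ}
    (h : ¬↑e.support ⊆ t) (c : R) :
    aeval (t.indicator X) (monomial e c) = (0 : MvPolynomial σ R) := by
  obtain ⟨i, hi, hit⟩ := Set.not_subset.mp h
  rw [aeval_monomial, Finsupp.prod, Finset.prod_eq_zero hi, mul_zero]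
  rw [Set.indicator_of_notMem hit, zero_pow (Finsupp.mem_support_iff.mp hi)]

theorem coeff_aeval_indicator_X {t : Set σ} {m : σ →₀ ℕ} (hm : ↑m.support ⊆ t)
    (f : MvPolynomial σ R) : coeff m (aeval (t.indicator X) f) = coeff m f := by
  classical
  induction f using MvPolynomial.induction_on' with
  | monomial e c =>
    by_cases h : ↑e.support ⊆ t
    · rw [aeval_indicator_X_monomial_of_subset h]
    · rw [aeval_indicator_X_monomial_of_not_subset h, coeff_zero, coeff_monomial, if_neg]
      rintro rfl
      exact h hm
  | add p q hp hq => rw [map_add, coeff_add, coeff_add, hp, hq]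

end

section Reduced

variable {σ R : Type*} [CommRing R] [IsReduced R]

theorem isRadical_span_monomial_image {S : Set (σ →₀ ℕ)} (hS : ∀ s ∈ S, ∀ i, s i ≤ 1) :
    (Ideal.span ((fun s => monomial s (1 : R)) '' S)).IsRadical := by
  rintro f ⟨k, hk⟩
  rw [mem_ideal_span_monomial_image]
  intro m hm
  by_contra! hnot
  -- Killing the variables outside `m.support` kills every generator but keeps the term `m` of `f`.
  set φ := aeval (R := R) ((↑m.support : Set σ).indicator (X : σ → MvPolynomial σ R))
  have hker : Ideal.span ((fun s => monomial s (1 : R)) '' S) ≤ RingHom.ker φ := by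
    rw [Ideal.span_le]
    rintro _ ⟨s, hs, rfl⟩
    refine aeval_indicator_X_monomial_of_not_subset (fun hsub => hnot s hs fun i => ?_) _
    by_cases hi : s i = 0
    · simp [hi]
    · have := Finsupp.mem_support_iff.mp (hsub (Finsupp.mem_support_iff.mpr hi))
      have := hS s hs i
      omega
  have hφf : φ f = 0 := IsNilpotent.eq_zero ⟨k, by rw [← map_pow]; exact hker hk⟩
  apply mem_support_iff.mp hm
  rw [← coeff_aeval_indicator_X subset_rfl, hφf, coeff_zero]

theorem isRadical_span_of_forall_eq_X_mul_X {G : Set (MvPolynomial σ R)}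
    (hG : ∀ p ∈ G, ∃ i j, i ≠ j ∧ p = X i * X j) : (Ideal.span G).IsRadical := by
  have hG' : G = (fun s => monomial s 1) '' {s | monomial s (1 : R) ∈ G ∧ ∀ i, s i ≤ 1} := by
    refine subset_antisymm (fun p hp => ?_) (by rintro _ ⟨s, ⟨hs, -⟩, rfl⟩; exact hs)
    obtain ⟨i, j, hij, rfl⟩ := hG p hp
    have hmon : X i * X j = monomial (Finsupp.single i 1 + Finsupp.single j 1) (1 : R) := by
      rw [X, X, monomial_mul, one_mul]
    refine ⟨_, ⟨hmon ▸ hp, fun k => ?_⟩, hmon.symm⟩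
    classical
    simp only [Finsupp.add_apply, Finsupp.single_apply]
    split_ifs <;> simp_all
  rw [hG']
  exact isRadical_span_monomial_image fun s hs => hs.2

end Reduced

end MvPolynomial

namespace Ideal.IsRadical

variable {R : Type*} [CommRing R] {J : Ideal R}

theorem mem_of_add_mem_of_mul_mem (hJ : J.IsRadical) {a b : R} (hab : a + b ∈ J)
    (h : a * b ∈ J) : a ∈ J ∧ b ∈ J := by
  have ha : a ∈ J := hJ ⟨2, by
    rw [show a ^ 2 = a * (a + b) - a * b by ring]
    exact J.sub_mem (J.mul_mem_left a hab) h⟩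
  exact ⟨ha, by simpa using J.sub_mem hab ha⟩

theorem mem_of_add_add_mem_of_mul_mem (hJ : J.IsRadical) {a b c : R}
    (habc : a + b + c ∈ J) (hab : a * b ∈ J) (hac : a * c ∈ J) (hbc : b * c ∈ J) :
    a ∈ J ∧ b ∈ J ∧ c ∈ J := by
  have ha : a ∈ J := hJ ⟨2, by
    rw [show a ^ 2 = a * (a + b + c) - a * b - a * c by ring]
    exact J.sub_mem (J.sub_mem (J.mul_mem_left a habc) hab) hac⟩
  have hbc' : b + c ∈ J := by simpa [add_assoc] using J.sub_mem habc ha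
  exact ⟨ha, hJ.mem_of_add_mem_of_mul_mem hbc' hbc⟩

end Ideal.IsRadical

namespace Sunlet

variable {R : Type*} [CommRing R] {J : Ideal R} (x y : ℕ → R)

theorem chain_edge_mem (hJ : J.IsRadical) {a b : ℕ} (ha : x a * x (a + 1) ∈ J)
    (hchain : ∀ i, a ≤ i → i < b → x i * y i + x (i + 1) * x (i + 2) ∈ J) :
    ∀ i, a ≤ i → i ≤ b → x i * x (i + 1) ∈ J := by
  intro i hai
  induction i, hai using Nat.le_induction with
  | base => exact fun _ => ha
  | succ i hai ih =>
    intro hib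
    refine (hJ.mem_of_add_mem_of_mul_mem (hchain i hai (by omega)) ?_).2
    exact J.mem_of_dvd (Dvd.intro (y i * x (i + 2)) (by ring)) (ih (by omega))

theorem chain_whisker_mem (hJ : J.IsRadical) {a b : ℕ} (ha : x a * x (a + 1) ∈ J)
    (hchain : ∀ i, a ≤ i → i < b → x i * y i + x (i + 1) * x (i + 2) ∈ J) :
    ∀ i, a ≤ i → i < b → x i * y i ∈ J := by
  intro i hai hib
  refine (hJ.mem_of_add_mem_of_mul_mem (hchain i hai hib) ?_).1
  exact J.mem_of_dvd (Dvd.intro (y i * x (i + 2)) (by ring))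
    (chain_edge_mem x y hJ ha hchain i hai hib.le)

def edges (n : ℕ) : Set R :=
  {p | ∃ j ∈ Finset.Icc 1 n, p = x j * x (j + 1)} ∪ {p | ∃ j ∈ Finset.Icc 1 n, p = x j * y j}

structure IsQFamily (n : ℕ) (q : ℕ → R) : Prop where
  q_zero : q 0 = x 1 * x 2
  q_one : q 1 = x 1 * x n + x 2 * x 3
  q_of_le : ∀ i, 2 ≤ i → i ≤ n - 4 → q i = x i * y i + x (i + 1) * x (i + 2)
  q_sub_three : q (n - 3) = x 1 * y 1 + x (n - 1) * x n
  q_sub_two : q (n - 2) = x (n - 3) * y (n - 3) + x (n - 2) * x (n - 1)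
      + x (n - 2) * y (n - 2) * x n * y n
  q_sub_one : q (n - 1) = x (n - 2) * y (n - 2) + x (n - 1) * y (n - 1) + x n * y n

variable {x y} {n : ℕ} {q : ℕ → R}

theorem IsQFamily.span_le (hq : IsQFamily x y n q) (hn : 4 ≤ n) (hcyc : x (n + 1) = x 1) :
    Ideal.span (q '' Set.Iio n) ≤ Ideal.span (edges x y n) := by
  have hedge : ∀ j, 1 ≤ j → j ≤ n → x j * x (j + 1) ∈ Ideal.span (edges x y n) :=
    fun j h1 h2 => Ideal.subset_span (Or.inl ⟨j, Finset.mem_Icc.mpr ⟨h1, h2⟩, rfl⟩)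
  have hwhisker : ∀ j, 1 ≤ j → j ≤ n → x j * y j ∈ Ideal.span (edges x y n) :=
    fun j h1 h2 => Ideal.subset_span (Or.inr ⟨j, Finset.mem_Icc.mpr ⟨h1, h2⟩, rfl⟩)
  have hlast : x (n - 1) * x n ∈ Ideal.span (edges x y n) := by
    simpa [Nat.sub_add_cancel (by omega : 1 ≤ n)] using hedge (n - 1) (by omega) (by omega)
  rw [Ideal.span_le]
  rintro _ ⟨i, hi, rfl⟩
  rcases (show i = 0 ∨ i = 1 ∨ (2 ≤ i ∧ i ≤ n - 4) ∨ i = n - 3 ∨ i = n - 2 ∨ i = n - 1 by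
    simp only [Set.mem_Iio] at hi; omega) with rfl | rfl | ⟨h2, h4⟩ | rfl | rfl | rfl
  · rw [hq.q_zero]; exact hedge 1 le_rfl (by omega)
  · rw [hq.q_one, mul_comm, ← hcyc]
    exact Ideal.add_mem _ (hedge n (by omega) le_rfl) (hedge 2 (by omega) (by omega))
  · rw [hq.q_of_le i h2 h4]
    exact Ideal.add_mem _ (hwhisker i (by omega) (by omega))
      (hedge (i + 1) (by omega) (by omega))
  · rw [hq.q_sub_three]; exact Ideal.add_mem _ (hwhisker 1 le_rfl (by omega)) hlast
  · rw [hq.q_sub_two, mul_assoc _ (x n)]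
    refine Ideal.add_mem _ (Ideal.add_mem _ (hwhisker (n - 3) (by omega) (by omega)) ?_)
      (Ideal.mul_mem_right _ _ (hwhisker (n - 2) (by omega) (by omega)))
    simpa [show n - 2 + 1 = n - 1 by omega] using hedge (n - 2) (by omega) (by omega)
  · rw [hq.q_sub_one]
    exact Ideal.add_mem _ (Ideal.add_mem _ (hwhisker (n - 2) (by omega) (by omega))
      (hwhisker (n - 1) (by omega) (by omega))) (hwhisker n (by omega) le_rfl)

theorem IsQFamily.edges_subset (hq : IsQFamily x y n q) (hn : 5 ≤ n) (hcyc : x (n + 1) = x 1)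
    (hJ : J.IsRadical) (hqJ : ∀ i < n, q i ∈ J) : edges x y n ⊆ J := by
  have h12 : x 1 * x 2 ∈ J := hq.q_zero ▸ hqJ 0 (by omega)
  obtain ⟨h1n, h23⟩ := hJ.mem_of_add_mem_of_mul_mem (hq.q_one ▸ hqJ 1 (by omega))
    (J.mem_of_dvd (Dvd.intro (x n * x 3) (by ring)) h12)
  have hchain : ∀ i, 2 ≤ i → i < n - 3 → x i * y i + x (i + 1) * x (i + 2) ∈ J :=
    fun i h2 h3 => hq.q_of_le i h2 (by omega) ▸ hqJ i (by omega)
  have hpath := chain_edge_mem x y hJ h23 hchain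
  obtain ⟨h1y, hlast⟩ := hJ.mem_of_add_mem_of_mul_mem
    (hq.q_sub_three ▸ hqJ (n - 3) (by omega))
    (J.mem_of_dvd (Dvd.intro (y 1 * x (n - 1)) (by ring)) h1n)
  have h32 : x (n - 3) * x (n - 2) ∈ J := by
    simpa [show n - 3 + 1 = n - 2 by omega] using hpath (n - 3) (by omega) le_rfl
  obtain ⟨h3y, h21, hcross⟩ := hJ.mem_of_add_add_mem_of_mul_mem
    (hq.q_sub_two ▸ hqJ (n - 2) (by omega))
    (J.mem_of_dvd (Dvd.intro (y (n - 3) * x (n - 1)) (by ring)) h32)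
    (J.mem_of_dvd (Dvd.intro (y (n - 3) * y (n - 2) * x n * y n) (by ring)) h32)
    (J.mem_of_dvd (Dvd.intro (x (n - 2) * x (n - 2) * y (n - 2) * y n) (by ring)) hlast)
  obtain ⟨h2y, h1y', hny⟩ := hJ.mem_of_add_add_mem_of_mul_mem
    (hq.q_sub_one ▸ hqJ (n - 1) (by omega))
    (J.mem_of_dvd (Dvd.intro (y (n - 2) * y (n - 1)) (by ring)) h21)
    (J.mem_of_dvd (Dvd.intro 1 (by ring)) hcross)
    (J.mem_of_dvd (Dvd.intro (y (n - 1) * y n) (by ring)) hlast)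
  rintro _ (⟨j, hj, rfl⟩ | ⟨j, hj, rfl⟩) <;> rw [Finset.mem_Icc] at hj
  · rcases (show j = 1 ∨ (2 ≤ j ∧ j ≤ n - 3) ∨ j = n - 2 ∨ j = n - 1 ∨ j = n by omega) with
      rfl | ⟨h2, h3⟩ | rfl | rfl | rfl
    · exact h12
    · exact hpath j h2 h3
    · rwa [show n - 2 + 1 = n - 1 by omega]
    · rwa [Nat.sub_add_cancel (by omega : 1 ≤ n)]
    · rwa [hcyc, mul_comm]
  · rcases (show j = 1 ∨ (2 ≤ j ∧ j < n - 3) ∨ j = n - 3 ∨ j = n - 2 ∨ j = n - 1 ∨ j = n by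
      omega) with rfl | ⟨h2, h3⟩ | rfl | rfl | rfl | rfl
    · exact h1y
    · exact chain_whisker_mem x y hJ h23 hchain j h2 h3
    all_goals assumption

end Sunlet

/-- Let `n ≥ 6` and let `S_n` be the `n`-sunlet graph (the cycle `x_1 x_2, …, x_{n-1} x_n,
x_n x_1` together with the whiskers `x_i y_i`).  With the polynomials
`q_0 = x_1 x_2`, `q_1 = x_1 x_n + x_2 x_3`, `q_i = x_i y_i + x_{i+1} x_{i+2}`
for `i = 2, …, n-4`, `q_{n-3} = x_1 y_1 + x_{n-1} x_n`,
`q_{n-2} = x_{n-3} y_{n-3} + x_{n-2} x_{n-1} + x_{n-2} y_{n-2} x_n y_n` and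
`q_{n-1} = x_{n-2} y_{n-2} + x_{n-1} y_{n-1} + x_n y_n`, the edge ideal `I(S_n)` equals
the radical of `(q_0, …, q_{n-1})`.  (Here the `1`-based label `j` corresponds to the
variable indexed by `(j - 1 : Fin n)`, so indices are read cyclically.) -/
theorem sunlet_eq_radical_span {K : Type*} [Field K] (n : ℕ) [NeZero n] (hn : 6 ≤ n)
    (x y : ℕ → MvPolynomial (Fin n ⊕ Fin n) K)
    (hx : ∀ j, x j = X (Sum.inl ((j - 1 : ℕ) : Fin n)))
    (hy : ∀ j, y j = X (Sum.inr ((j - 1 : ℕ) : Fin n)))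
    (I : Ideal (MvPolynomial (Fin n ⊕ Fin n) K))
    (hI : I = Ideal.span
      ({p | ∃ j ∈ Finset.Icc 1 n, p = x j * x (j + 1)} ∪
       {p | ∃ j ∈ Finset.Icc 1 n, p = x j * y j}))
    (q : ℕ → MvPolynomial (Fin n ⊕ Fin n) K)
    (hq0 : q 0 = x 1 * x 2)
    (hq1 : q 1 = x 1 * x n + x 2 * x 3)
    (hqi : ∀ i, 2 ≤ i → i ≤ n - 4 → q i = x i * y i + x (i + 1) * x (i + 2))
    (hqn3 : q (n - 3) = x 1 * y 1 + x (n - 1) * x n)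
    (hqn2 : q (n - 2) = x (n - 3) * y (n - 3) + x (n - 2) * x (n - 1)
      + x (n - 2) * y (n - 2) * x n * y n)
    (hqn1 : q (n - 1) = x (n - 2) * y (n - 2) + x (n - 1) * y (n - 1) + x n * y n) :
    I = (Ideal.span (q '' Set.Iio n)).radical := by
  have hq : Sunlet.IsQFamily x y n q := ⟨hq0, hq1, hqi, hqn3, hqn2, hqn1⟩
  have hcyc : x (n + 1) = x 1 := by simp [hx]
  have hIrad : I.IsRadical := by
    rw [hI]
    refine isRadical_span_of_forall_eq_X_mul_X ?_
    rintro _ (⟨j, hj, rfl⟩ | ⟨j, -, rfl⟩)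
    · obtain ⟨k, rfl⟩ : ∃ k, j = k + 1 := ⟨j - 1, by rw [Finset.mem_Icc] at hj; omega⟩
      refine ⟨_, _, ?_, by rw [hx, hx]⟩
      simp only [add_tsub_cancel_right, Nat.cast_add, Nat.cast_one, ne_eq, Sum.inl.injEq,
        left_eq_add, Fin.one_eq_zero_iff]
      omega
    · exact ⟨_, _, Sum.inl_ne_inr, by rw [hx, hy]⟩
  refine le_antisymm ?_ ?_
  · rw [hI, Ideal.span_le]
    exact hq.edges_subset (by omega) hcyc (Ideal.radical_isRadical _)
      fun i hi => Ideal.le_radical (Ideal.subset_span ⟨i, hi, rfl⟩)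
  · rw [hIrad.radical_le_iff, hI]
    exact hq.span_le (by omega) hcyc
end

section
/- Let S_5 be the 5-sunlet graph, with edge ideal I(S_5) in R = K[x_1,...,x_5,y_1,...,y_5] over a field K. Define q_0 = x_1 x_2; q_1 = x_1 x_5 + x_2 x_3; q_2 = x_1 y_1 + x_4 x_5; q_3 = x_2 y_2 + x_3 x_4 + x_3 y_3 x_5 y_5; q_4 = x_3 y_3 + x_4 y_4 + x_5 y_5. Then I(S_5) equals the radical of the ideal (q_0, q_1, q_2, q_3, q_4). -/
/-!
Every `q_j` is a sum of edge monomials, so `(q_0, …, q_4) ⊆ I(S_5)`, and `I(S_5)` is radical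
because squarefree monomial ideals are intersections of the primes spanned by variables.
Conversely, if `a + b` and `a * b` lie in a radical ideal, so do `a` and `b`
(`a ^ 2 = a (a + b) - a b`); starting from `q_0 = x_1 x_2`, this splits `q_1, …, q_4` one
after another into the edges of `S_5`.
-/

open MvPolynomial

lemma Ideal.IsRadical.mem_and_mem_of_add_mem_of_mul_mem {R : Type*} [CommRing R]
    {J : Ideal R} (hJ : J.IsRadical) {a b : R} (hab : a + b ∈ J) (hmul : a * b ∈ J) :
    a ∈ J ∧ b ∈ J := by
  have ha : a ∈ J := hJ ⟨2, by
    rw [show a ^ 2 = a * (a + b) - a * b by ring]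
    exact J.sub_mem (J.mul_mem_left a hab) hmul⟩
  exact ⟨ha, by simpa using J.sub_mem hab ha⟩

lemma Finsupp.sum_single_one_le_iff {σ : Type*} {t : Finset σ} {m : σ →₀ ℕ} :
    ∑ i ∈ t, Finsupp.single i 1 ≤ m ↔ ∀ i ∈ t, m i ≠ 0 := by
  classical
  simp only [Finsupp.le_def, Finsupp.finsetSum_apply, Finsupp.single_apply, Finset.sum_ite_eq']
  refine forall_congr' fun i => ?_
  split_ifs <;> simp [*, Nat.one_le_iff_ne_zero]

namespace MvPolynomial

variable {σ R : Type*} [CommRing R] [IsDomain R]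

theorem isPrime_span_X_image (s : Set σ) :
    (Ideal.span (X '' s : Set (MvPolynomial σ R))).IsPrime := by
  classical
  set P := Ideal.span (X '' s : Set (MvPolynomial σ R))
  let φ : MvPolynomial σ R →ₐ[R] MvPolynomial σ R := aeval fun i => if i ∈ s then 0 else X i
  -- `P` is the kernel of `φ`, which sets the variables of `s` to zero; its target is a domain.
  have hφ : (Ideal.Quotient.mkₐ R P).comp φ = Ideal.Quotient.mkₐ R P := by
    refine algHom_ext fun i => ?_
    by_cases hi : i ∈ s
    · have hXi : X i ∈ P := Ideal.subset_span (Set.mem_image_of_mem X hi)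
      simp [φ, hi, Ideal.Quotient.eq_zero_iff_mem.2 hXi]
    · simp [φ, hi]
  have hker : P = RingHom.ker φ := by
    refine le_antisymm (Ideal.span_le.2 ?_) fun f hf => ?_
    · rintro _ ⟨i, hi, rfl⟩
      simp [φ, hi]
    · rw [← Ideal.Quotient.eq_zero_iff_mem, ← Ideal.Quotient.mkₐ_eq_mk R, ← hφ]
      simpa using congrArg (Ideal.Quotient.mkₐ R P) hf
  rw [hker]
  exact RingHom.ker_isPrime _

theorem isRadical_span_prod_X (S : Set (Finset σ)) :
    (Ideal.span ((fun t => ∏ i ∈ t, X i) '' S : Set (MvPolynomial σ R))).IsRadical := by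
  classical
  set J := Ideal.span ((fun t => ∏ i ∈ t, X i) '' S : Set (MvPolynomial σ R))
  intro f hf
  have hJ : J = Ideal.span
      ((fun e => monomial e (1 : R)) '' ((fun t => ∑ i ∈ t, Finsupp.single i 1) '' S)) := by
    simp only [J, Set.image_image, monomial_sum_one, X]
  rw [hJ, mem_ideal_span_monomial_image]
  intro m hm
  by_contra! hnot
  -- The variables missing from `m` meet every generator, so they span a prime above `J`
  -- that contains `f` but not the monomial `m` of `f`.
  have hcover : ∀ t ∈ S, ∃ i ∈ t, m i = 0 := fun t ht => by
    simpa [Finsupp.sum_single_one_le_iff] using hnot _ ⟨t, ht, rfl⟩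
  set C := {i | m i = 0}
  have hJC : J ≤ Ideal.span (X '' C) := by
    refine Ideal.span_le.2 ?_
    rintro _ ⟨t, ht, rfl⟩
    obtain ⟨i, hit, hi⟩ := hcover t ht
    exact Ideal.mem_of_dvd _ (Finset.dvd_prod_of_mem X hit) (Ideal.subset_span ⟨i, hi, rfl⟩)
  have hfC : f ∈ Ideal.span (X '' C : Set (MvPolynomial σ R)) :=
    (isPrime_span_X_image C).isRadical.radical_le_iff.2 hJC hf
  obtain ⟨i, hi, hmi⟩ := mem_ideal_span_X_image.1 hfC m hm
  exact hmi hi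

end MvPolynomial

section Sunlet

variable {R : Type*} [CommRing R]

def sunletEdges (x y : Fin 5 → R) : Set R :=
  {x 0 * x 1, x 1 * x 2, x 2 * x 3, x 3 * x 4, x 4 * x 0,
   x 0 * y 0, x 1 * y 1, x 2 * y 2, x 3 * y 3, x 4 * y 4}

def sunletQ (x y : Fin 5 → R) : Set R :=
  {x 0 * x 1,
   x 0 * x 4 + x 1 * x 2,
   x 0 * y 0 + x 3 * x 4,
   x 1 * y 1 + x 2 * x 3 + x 2 * y 2 * x 4 * y 4,
   x 2 * y 2 + x 3 * y 3 + x 4 * y 4}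

lemma span_sunletQ_le_span_sunletEdges (x y : Fin 5 → R) :
    Ideal.span (sunletQ x y) ≤ Ideal.span (sunletEdges x y) := by
  set I := Ideal.span (sunletEdges x y)
  rw [Ideal.span_le]
  rintro q (rfl | rfl | rfl | rfl | rfl) <;>
    repeat' first
      | (apply Ideal.subset_span; simp [sunletEdges, mul_comm]; done)
      | apply add_mem
      | apply I.mul_mem_right

lemma sunletEdges_subset_radical_span_sunletQ (x y : Fin 5 → R) :
    sunletEdges x y ⊆ (Ideal.span (sunletQ x y)).radical := by
  set P := (Ideal.span (sunletQ x y)).radical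
  have hP : P.IsRadical := Ideal.radical_isRadical _
  have gen : ∀ {q}, q ∈ sunletQ x y → q ∈ P := fun hq => Ideal.le_radical (Ideal.subset_span hq)
  have h01 : x 0 * x 1 ∈ P := gen (by simp [sunletQ])
  -- Each step splits a sum `a + b ∈ P` whose product `a * b` lies in `P` by the earlier steps.
  obtain ⟨h04, h12⟩ := hP.mem_and_mem_of_add_mem_of_mul_mem
    (a := x 0 * x 4) (b := x 1 * x 2) (gen (by simp [sunletQ]))
    (by convert P.mul_mem_left (x 2 * x 4) h01 using 1; ring)
  obtain ⟨h0y0, h34⟩ := hP.mem_and_mem_of_add_mem_of_mul_mem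
    (a := x 0 * y 0) (b := x 3 * x 4) (gen (by simp [sunletQ]))
    (by convert P.mul_mem_left (y 0 * x 3) h04 using 1; ring)
  obtain ⟨h1y1, hq3'⟩ := hP.mem_and_mem_of_add_mem_of_mul_mem
    (a := x 1 * y 1) (b := x 2 * x 3 + x 2 * y 2 * x 4 * y 4)
    (by rw [← add_assoc]; exact gen (by simp [sunletQ]))
    (by convert P.mul_mem_left (y 1 * x 3 + y 1 * y 2 * x 4 * y 4) h12 using 1; ring)
  obtain ⟨h23, h2244⟩ := hP.mem_and_mem_of_add_mem_of_mul_mem hq3'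
    (by convert P.mul_mem_left (x 2 * x 2 * y 2 * y 4) h34 using 1; ring)
  obtain ⟨hq4', h4y4⟩ := hP.mem_and_mem_of_add_mem_of_mul_mem
    (a := x 2 * y 2 + x 3 * y 3) (b := x 4 * y 4) (gen (by simp [sunletQ]))
    (by convert P.add_mem h2244 (P.mul_mem_left (y 3 * y 4) h34) using 1; ring)
  obtain ⟨h2y2, h3y3⟩ := hP.mem_and_mem_of_add_mem_of_mul_mem hq4'
    (by convert P.mul_mem_left (y 2 * y 3) h23 using 1; ring)
  rintro e (rfl | rfl | rfl | rfl | rfl | rfl | rfl | rfl | rfl | rfl)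
  exacts [h01, h12, h23, h34, by rw [mul_comm]; exact h04, h0y0, h1y1, h2y2, h3y3, h4y4]

end Sunlet

lemma sunletEdges_X_eq_image_prod_X {R : Type*} [CommRing R] :
    sunletEdges (fun i => (X (Sum.inl i) : MvPolynomial (Fin 5 ⊕ Fin 5) R))
      (fun i => X (Sum.inr i)) =
      (fun t => ∏ i ∈ t, X i) '' ({{.inl 0, .inl 1}, {.inl 1, .inl 2}, {.inl 2, .inl 3},
        {.inl 3, .inl 4}, {.inl 4, .inl 0}, {.inl 0, .inr 0}, {.inl 1, .inr 1},
        {.inl 2, .inr 2}, {.inl 3, .inr 3}, {.inl 4, .inr 4}} :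
        Set (Finset (Fin 5 ⊕ Fin 5))) := by
  simp [sunletEdges, Set.image_insert_eq]

/-- Let `S_5` be the `5`-sunlet graph, with edge ideal `I(S_5)` generated by the cycle
edges `x_1x_2, x_2x_3, x_3x_4, x_4x_5, x_5x_1` and the whiskers `x_iy_i`.  With
`q_0 = x_1 x_2`, `q_1 = x_1 x_5 + x_2 x_3`, `q_2 = x_1 y_1 + x_4 x_5`,
`q_3 = x_2 y_2 + x_3 x_4 + x_3 y_3 x_5 y_5`, `q_4 = x_3 y_3 + x_4 y_4 + x_5 y_5`
we have `I(S_5) = √(q_0, q_1, q_2, q_3, q_4)`.  (Vertices are `0`-indexed: `x_j` of the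
paper is `x (j-1)` here.) -/
theorem sunlet_five_eq_radical_span {K : Type*} [Field K]
    (x y : Fin 5 → MvPolynomial (Fin 5 ⊕ Fin 5) K)
    (hx : ∀ i, x i = X (Sum.inl i)) (hy : ∀ i, y i = X (Sum.inr i))
    (I : Ideal (MvPolynomial (Fin 5 ⊕ Fin 5) K))
    (hI : I = Ideal.span
      {x 0 * x 1, x 1 * x 2, x 2 * x 3, x 3 * x 4, x 4 * x 0,
       x 0 * y 0, x 1 * y 1, x 2 * y 2, x 3 * y 3, x 4 * y 4}) :
    I = (Ideal.span
      {x 0 * x 1,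
       x 0 * x 4 + x 1 * x 2,
       x 0 * y 0 + x 3 * x 4,
       x 1 * y 1 + x 2 * x 3 + x 2 * y 2 * x 4 * y 4,
       x 2 * y 2 + x 3 * y 3 + x 4 * y 4}).radical := by
  have hrad : (Ideal.span (sunletEdges x y)).IsRadical := by
    obtain rfl : x = fun i => X (Sum.inl i) := funext hx
    obtain rfl : y = fun i => X (Sum.inr i) := funext hy
    rw [sunletEdges_X_eq_image_prod_X]
    exact isRadical_span_prod_X _
  subst hI
  exact le_antisymm (Ideal.span_le.2 (sunletEdges_subset_radical_span_sunletQ x y))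
    (hrad.radical_le_iff.2 (span_sunletQ_le_span_sunletEdges x y))
end

section
/- Let n ≥ 3 and k ≥ 1 be integers, let C_n be the cycle graph on the vertex set {x_1,...,x_n} (with edges x_1x_2, ..., x_{n−1}x_n, x_nx_1), and let G be the graph obtained from C_n by adding, to each vertex x_i, the k edges x_i y_{i,1}, ..., x_i y_{i,k} to new vertices y_{i,l}. Then the set A consisting of the vertices x_{2j−1} for j = 1,...,⌈n/2⌉ together with the vertices y_{2j,1},...,y_{2j,k} for j = 1,...,⌊n/2⌋ is a minimal vertex cover of G of cardinality ⌈n/2⌉ + ⌊n/2⌋·k. -/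
/-!
Let `A` consist of the cycle vertices `xᵢ` with `i` even and the whiskers hanging at the `xᵢ` with
`i` odd. Every cycle edge `xᵢxᵢ₊₁` has an even endpoint (for odd `n` both `x_{n-1}` and `x₀` are
even), and a whisker at `xᵢ` is covered by `xᵢ` or by itself according to the parity of `i`.
Every vertex of `A` has a neighbour outside `A` (`y_{i,0}` for an even `xᵢ`, and `xᵢ` for a whisker
at an odd `xᵢ`), so removing any vertex of `A` uncovers an edge.
-/

open SimpleGraph Finset

theorem Fin.card_filter_val_eq_count {n : ℕ} (p : ℕ → Prop) [DecidablePred p] :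
    #{i : Fin n | p i} = Nat.count p n := by
  rw [card_filter, Fin.sum_univ_eq_sum_range (fun i => if p i then 1 else 0), ← card_filter,
    Nat.count_eq_card_filter_range]

theorem Fin.card_filter_val_mod_two_eq {n r : ℕ} (hr : r < 2) :
    #{i : Fin n | i.val % 2 = r} = (n + 1 - r) / 2 := by
  have hcount : Nat.count (· % 2 = r) n = Nat.count (· ≡ r [MOD 2]) n := by
    simp only [Nat.ModEq, Nat.mod_eq_of_lt hr]
  rw [Fin.card_filter_val_eq_count (· % 2 = r), hcount, Nat.count_modEq_card _ two_pos]
  split_ifs <;> omega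

theorem Fin.val_add_one_mod_two_eq_zero {n : ℕ} [NeZero n] {i : Fin n} (hi : i.val % 2 = 1) :
    (i + 1).val % 2 = 0 := by
  obtain ⟨m, rfl⟩ := Nat.exists_eq_succ_of_ne_zero (NeZero.ne n)
  rw [Fin.val_add_one]
  split_ifs <;> omega

namespace SimpleGraph

variable {V : Type*}

theorem isVertexCover_fromEdgeSet {s : Set (Sym2 V)} {c : Set V} (h : ∀ e ∈ s, ∃ v ∈ e, v ∈ c) :
    (fromEdgeSet s).IsVertexCover c := by
  intro u v huv
  obtain ⟨w, hw, hwc⟩ := h _ (fromEdgeSet_adj s |>.1 huv).1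
  rcases Sym2.mem_iff.1 hw with rfl | rfl
  exacts [Or.inl hwc, Or.inr hwc]

theorem not_isVertexCover_of_ssubset {G : SimpleGraph V} {A B : Set V}
    (hA : ∀ a ∈ A, ∃ b ∉ A, G.Adj a b) (hBA : B ⊂ A) : ¬ G.IsVertexCover B := by
  intro hB
  obtain ⟨a, haA, haB⟩ := Set.exists_of_ssubset hBA
  obtain ⟨b, hbA, hab⟩ := hA a haA
  exact (hB hab).elim haB fun hbB => hbA (hBA.subset hbB)

end SimpleGraph

section CycleWithWhiskers

variable (n k : ℕ)

/-- The cycle `x₀ ⋯ x_{n-1}` with `k` pendant vertices `y_{i,l} = inr (i, l)` attached to each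
`xᵢ = inl i`. -/
def cycleWithWhiskers [NeZero n] : SimpleGraph (Fin n ⊕ Fin n × Fin k) :=
  fromEdgeSet
    ({e | ∃ i : Fin n, e = s(Sum.inl i, Sum.inl (i + 1))} ∪
     {e | ∃ (i : Fin n) (l : Fin k), e = s(Sum.inl i, Sum.inr (i, l))})

def alternatingCover : Finset (Fin n ⊕ Fin n × Fin k) :=
  ((univ.filter fun i : Fin n => i.val % 2 = 0).image Sum.inl) ∪
    ((univ.filter fun p : Fin n × Fin k => p.1.val % 2 = 1).image Sum.inr)

variable {n k}

@[simp]
theorem inl_mem_alternatingCover {i : Fin n} :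
    (Sum.inl i : Fin n ⊕ Fin n × Fin k) ∈ alternatingCover n k ↔ i.val % 2 = 0 := by
  simp [alternatingCover]

@[simp]
theorem inr_mem_alternatingCover {i : Fin n} {l : Fin k} :
    (Sum.inr (i, l) : Fin n ⊕ Fin n × Fin k) ∈ alternatingCover n k ↔ i.val % 2 = 1 := by
  simp [alternatingCover]

theorem cycleWithWhiskers_adj_inl_inr [NeZero n] (i : Fin n) (l : Fin k) :
    (cycleWithWhiskers n k).Adj (Sum.inl i) (Sum.inr (i, l)) :=
  (fromEdgeSet_adj _).2 ⟨Or.inr ⟨i, l, rfl⟩, Sum.inl_ne_inr⟩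

variable (n k)

theorem isVertexCover_alternatingCover [NeZero n] :
    (cycleWithWhiskers n k).IsVertexCover (alternatingCover n k : Set _) := by
  refine isVertexCover_fromEdgeSet ?_
  rintro _ (⟨i, rfl⟩ | ⟨i, l, rfl⟩) <;> rcases Nat.mod_two_eq_zero_or_one i.val with hi | hi
  · exact ⟨_, Sym2.mem_mk_left _ _, by simpa using hi⟩
  · exact ⟨_, Sym2.mem_mk_right _ _, by simpa using Fin.val_add_one_mod_two_eq_zero hi⟩
  · exact ⟨_, Sym2.mem_mk_left _ _, by simpa using hi⟩
  · exact ⟨_, Sym2.mem_mk_right _ _, by simpa using hi⟩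

theorem exists_adj_notMem_alternatingCover [NeZero n] (hk : 0 < k) :
    ∀ a ∈ (alternatingCover n k : Set _), ∃ b ∉ (alternatingCover n k : Set _),
      (cycleWithWhiskers n k).Adj a b := by
  rintro (i | ⟨i, l⟩) ha <;> simp only [mem_coe, inl_mem_alternatingCover,
    inr_mem_alternatingCover] at ha
  · exact ⟨Sum.inr (i, ⟨0, hk⟩), by simp [ha], cycleWithWhiskers_adj_inl_inr i _⟩
  · exact ⟨Sum.inl i, by simp [ha], (cycleWithWhiskers_adj_inl_inr i l).symm⟩

theorem card_alternatingCover : #(alternatingCover n k) = (n + 1) / 2 + n / 2 * k := by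
  rw [alternatingCover, card_union_of_disjoint (by simp [Finset.disjoint_left]),
    card_image_of_injective _ Sum.inl_injective, card_image_of_injective _ Sum.inr_injective,
    ← univ_product_univ, filter_product_left (fun i : Fin n => i.val % 2 = 1), card_product,
    Fin.card_filter_val_mod_two_eq two_pos, Fin.card_filter_val_mod_two_eq one_lt_two]
  simp

end CycleWithWhiskers

theorem cycle_multiwhisker_minimal_vertex_cover_general (n k : ℕ) [NeZero n]
    (hk : 1 ≤ k)
    (G : SimpleGraph (Fin n ⊕ Fin n × Fin k))
    (hG : G = SimpleGraph.fromEdgeSet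
      ({e | ∃ i : Fin n, e = s(Sum.inl i, Sum.inl (i + 1))} ∪
       {e | ∃ (i : Fin n) (l : Fin k), e = s(Sum.inl i, Sum.inr (i, l))}))
    (A : Finset (Fin n ⊕ Fin n × Fin k))
    (hA : A = ((Finset.univ.filter fun i : Fin n => i.val % 2 = 0).image Sum.inl) ∪
      ((Finset.univ.filter fun p : Fin n × Fin k => p.1.val % 2 = 1).image Sum.inr)) :
    (∀ u v, G.Adj u v → u ∈ A ∨ v ∈ A) ∧
      (∀ B ⊂ A, ¬ ∀ u v, G.Adj u v → u ∈ B ∨ v ∈ B) ∧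
      A.card = (n + 1) / 2 + (n / 2) * k := by
  change G = cycleWithWhiskers n k at hG
  change A = alternatingCover n k at hA
  subst hG hA
  exact ⟨fun _ _ huv => isVertexCover_alternatingCover n k huv,
    fun B hB hcover => not_isVertexCover_of_ssubset (exists_adj_notMem_alternatingCover n k hk)
      (coe_ssubset.2 hB) fun _ _ huv => hcover _ _ huv,
    card_alternatingCover n k⟩

/-- Let `n ≥ 3`, `k ≥ 1`, let `C_n` be the cycle on `x_1, …, x_n` and let `G` be obtained
from `C_n` by adding the `k` whiskers `x_i y_{i,1}, …, x_i y_{i,k}` at each vertex `x_i`.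
Then the set `A = {x_{2j-1} : 1 ≤ j ≤ ⌈n/2⌉} ∪ {y_{2j,l} : 1 ≤ j ≤ ⌊n/2⌋, 1 ≤ l ≤ k}`
is a minimal vertex cover of `G` of cardinality `⌈n/2⌉ + ⌊n/2⌋·k`.  (Vertices are
`0`-indexed here: the paper's `x_j` is `Sum.inl (j-1)`, so `x_{2j-1}` has even index and
`y_{2j,l}` has odd first index.) -/
theorem cycle_multiwhisker_minimal_vertex_cover (n k : ℕ) [NeZero n]
    (hn : 3 ≤ n) (hk : 1 ≤ k)
    (G : SimpleGraph (Fin n ⊕ Fin n × Fin k))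
    (hG : G = SimpleGraph.fromEdgeSet
      ({e | ∃ i : Fin n, e = s(Sum.inl i, Sum.inl (i + 1))} ∪
       {e | ∃ (i : Fin n) (l : Fin k), e = s(Sum.inl i, Sum.inr (i, l))}))
    (A : Finset (Fin n ⊕ Fin n × Fin k))
    (hA : A = ((Finset.univ.filter fun i : Fin n => i.val % 2 = 0).image Sum.inl) ∪
      ((Finset.univ.filter fun p : Fin n × Fin k => p.1.val % 2 = 1).image Sum.inr)) :
    (∀ u v, G.Adj u v → u ∈ A ∨ v ∈ A) ∧
      (∀ B ⊂ A, ¬ ∀ u v, G.Adj u v → u ∈ B ∨ v ∈ B) ∧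
      A.card = (n + 1) / 2 + (n / 2) * k :=
  cycle_multiwhisker_minimal_vertex_cover_general n k hk G hG A hA
end
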